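/- Let ξ be a random variable on [-δ,δ] with the scaled symmetric Beta(α,α) density p_{α,δ}(t) = (2δ)^{1-2α}/B(α,α) · (δ²-t²)^{α-1}, α>0, δ>0. Then for any u ∈ ℝ, the variance of η = (ξ-u)² equals (4δ²/(2α+1))·[u² + δ²α/((2α+1)(2α+3))]. -/

import Mathlib

/-! The variance of `(ξ - u)²` only involves the moments `E ξ^k` for `k ≤ 4`. The odd ones vanish
because the density is even, and integrating `d/dt [t^(k+1) (δ² - t²)^α]` over `(-δ, δ)` gives
`(k + 1 + 2α) E ξ^(k+2) = (k + 1) δ² E ξ^k`, whence `E ξ² = δ²/(2α+1)` and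
`E ξ⁴ = 3δ⁴/((2α+1)(2α+3))`. The normalising constant never has to be computed: all that is used
is that the law of `ξ` is a probability measure. -/

open MeasureTheory ProbabilityTheory
open scoped ENNReal

/-- The scaled symmetric Beta(α,α) density on (-δ,δ). -/
noncomputable def betaDensity (α δ : ℝ) (t : ℝ) : ℝ :=
  (2 * δ) ^ (1 - 2 * α) / (Real.Gamma α * Real.Gamma α / Real.Gamma (2 * α)) *
    (δ ^ 2 - t ^ 2) ^ (α - 1)

open Set Finset

lemma setIntegral_Ioo_neg_eq_zero_of_odd {f : ℝ → ℝ} {a : ℝ} (ha : 0 ≤ a)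
    (hf : ∀ t, f (-t) = -f t) : ∫ t in Ioo (-a) a, f t = 0 := by
  rw [← integral_Ioc_eq_integral_Ioo, ← intervalIntegral.integral_of_le (by linarith)]
  have h := intervalIntegral.integral_comp_neg (a := -a) (b := a) f
  simp only [hf, neg_neg, intervalIntegral.integral_neg] at h
  linarith

lemma integrableOn_Ioo_pow_mul {g : ℝ → ℝ} {a b : ℝ} (hg : IntegrableOn g (Ioo a b)) (k : ℕ) :
    IntegrableOn (fun t => t ^ k * g t) (Ioo a b) := by
  rw [← integrableOn_Icc_iff_integrableOn_Ioo] at hg ⊢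
  exact hg.continuousOn_mul (continuous_pow k).continuousOn isCompact_Icc

theorem setIntegral_pow_mul_rpow_sq_sub_sq_recurrence {α δ : ℝ} (hα : 0 < α) (hδ : 0 < δ)
    (hw : IntegrableOn (fun t => (δ ^ 2 - t ^ 2) ^ (α - 1)) (Ioo (-δ) δ)) (k : ℕ) :
    ((k : ℝ) + 1 + 2 * α) * ∫ t in Ioo (-δ) δ, t ^ (k + 2) * (δ ^ 2 - t ^ 2) ^ (α - 1) =
      ((k : ℝ) + 1) * δ ^ 2 * ∫ t in Ioo (-δ) δ, t ^ k * (δ ^ 2 - t ^ 2) ^ (α - 1) := by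
  set F : ℝ → ℝ := fun t => t ^ (k + 1) * (δ ^ 2 - t ^ 2) ^ α
  set F' : ℝ → ℝ := fun t => ((k : ℝ) + 1) * δ ^ 2 * (t ^ k * (δ ^ 2 - t ^ 2) ^ (α - 1)) -
    ((k : ℝ) + 1 + 2 * α) * (t ^ (k + 2) * (δ ^ 2 - t ^ 2) ^ (α - 1))
  have hderiv : ∀ t ∈ Ioo (-δ) δ, HasDerivAt F (F' t) t := by
    intro t ⟨ht₁, ht₂⟩
    have hpos : 0 < δ ^ 2 - t ^ 2 := by nlinarith
    have hsq : HasDerivAt (fun t : ℝ => δ ^ 2 - t ^ 2) (-(2 * t)) t := by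
      simpa using (hasDerivAt_pow 2 t).const_sub (δ ^ 2)
    refine ((hasDerivAt_pow (k + 1) t).mul
      (hsq.rpow_const (p := α) (Or.inl hpos.ne'))).congr_deriv ?_
    have hsplit : (δ ^ 2 - t ^ 2) ^ α = (δ ^ 2 - t ^ 2) * (δ ^ 2 - t ^ 2) ^ (α - 1) := by
      rw [← Real.rpow_one_add' hpos.le (by linarith), add_sub_cancel]
    simp only [F', hsplit, Nat.add_sub_cancel]
    push_cast
    ring
  have hcont : ContinuousOn F (Icc (-δ) δ) :=
    ((continuous_pow _).mul ((continuous_const.sub (continuous_pow 2)).rpow_const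
      fun _ => Or.inr hα.le)).continuousOn
  have hwk := integrableOn_Ioo_pow_mul hw
  have hint : IntervalIntegrable F' volume (-δ) δ := by
    rw [intervalIntegrable_iff_integrableOn_Ioo_of_le (by linarith)]
    exact ((hwk k).const_mul _).sub ((hwk (k + 2)).const_mul _)
  have hFTC := intervalIntegral.integral_eq_sub_of_hasDerivAt_of_le (by linarith) hcont hderiv hint
  have hF : ∀ s, s ^ 2 = δ ^ 2 → F s = 0 := fun s hs => by
    simp [F, hs, Real.zero_rpow hα.ne']
  rw [hF δ rfl, hF (-δ) (neg_sq δ), sub_zero, intervalIntegral.integral_of_le (by linarith),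
    integral_Ioc_eq_integral_Ioo, integral_sub ((hwk k).const_mul _) ((hwk (k + 2)).const_mul _),
    integral_const_mul, integral_const_mul] at hFTC
  linarith

lemma sub_const_pow_eq_sum {Ω : Type*} (X : Ω → ℝ) (u : ℝ) (n : ℕ) :
    (fun ω => (X ω - u) ^ n) =
      fun ω => ∑ k ∈ range (n + 1), X ω ^ k * (-u) ^ (n - k) * n.choose k := by
  ext ω
  rw [sub_eq_add_neg, add_pow]

section Moments

variable {Ω : Type*} [MeasurableSpace Ω] {μ : Measure Ω} {X : Ω → ℝ}

lemma integrable_sub_const_pow (hX : ∀ k : ℕ, Integrable (fun ω => X ω ^ k) μ) (u : ℝ) (n : ℕ) :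
    Integrable (fun ω => (X ω - u) ^ n) μ := by
  rw [sub_const_pow_eq_sum]
  exact integrable_finsetSum _ fun k _ => ((hX k).mul_const _).mul_const _

lemma integral_sub_const_pow (hX : ∀ k : ℕ, Integrable (fun ω => X ω ^ k) μ) (u : ℝ) (n : ℕ) :
    ∫ ω, (X ω - u) ^ n ∂μ =
      ∑ k ∈ range (n + 1), (∫ ω, X ω ^ k ∂μ) * (-u) ^ (n - k) * n.choose k := by
  rw [sub_const_pow_eq_sum, integral_finsetSum _ fun k _ => ((hX k).mul_const _).mul_const _]
  simp only [integral_mul_const]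

theorem variance_sq_sub_const [IsProbabilityMeasure μ]
    (hX : ∀ k : ℕ, Integrable (fun ω => X ω ^ k) μ)
    (h₁ : ∫ ω, X ω ∂μ = 0) (h₃ : ∫ ω, X ω ^ 3 ∂μ = 0) (u : ℝ) :
    variance (fun ω => (X ω - u) ^ 2) μ =
      ∫ ω, X ω ^ 4 ∂μ - (∫ ω, X ω ^ 2 ∂μ) ^ 2 + 4 * u ^ 2 * ∫ ω, X ω ^ 2 ∂μ := by
  have hsq (ω : Ω) : ((X ω - u) ^ 2) ^ 2 = (X ω - u) ^ 4 := by ring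
  have hL2 : MemLp (fun ω => (X ω - u) ^ 2) 2 μ := by
    refine (memLp_two_iff_integrable_sq (integrable_sub_const_pow hX u 2).1).2 ?_
    simpa only [hsq] using integrable_sub_const_pow hX u 4
  rw [variance_eq_sub hL2]
  simp only [Pi.pow_apply, hsq, integral_sub_const_pow hX u, Finset.sum_range_succ,
    Finset.sum_range_zero, pow_one, h₁, h₃, pow_zero, integral_const, probReal_univ, smul_eq_mul]
  norm_num [Nat.choose]
  ring

end Moments

noncomputable def betaLaw (α δ : ℝ) : Measure ℝ :=
  (volume.restrict (Ioo (-δ) δ)).withDensity fun t => ENNReal.ofReal (betaDensity α δ t)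

section betaLaw

variable {α δ : ℝ}

lemma exists_pos_betaDensity_eq (hα : 0 < α) (hδ : 0 < δ) :
    ∃ c > 0, ∀ t, betaDensity α δ t = c * (δ ^ 2 - t ^ 2) ^ (α - 1) :=
  ⟨_, div_pos (by positivity) (div_pos (mul_self_pos.2 (Real.Gamma_pos_of_pos hα).ne')
    (Real.Gamma_pos_of_pos (by positivity))), fun _ => rfl⟩

lemma betaDensity_nonneg (hα : 0 < α) (hδ : 0 < δ) {t : ℝ} (ht : t ∈ Ioo (-δ) δ) :
    0 ≤ betaDensity α δ t := by
  obtain ⟨c, hc, hp⟩ := exists_pos_betaDensity_eq hα hδ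
  rw [hp]
  exact mul_nonneg hc.le (Real.rpow_nonneg (by nlinarith [ht.1, ht.2]) _)

lemma measurable_betaDensity : Measurable (betaDensity α δ) := by
  unfold betaDensity; fun_prop

lemma integral_betaLaw (hα : 0 < α) (hδ : 0 < δ) (f : ℝ → ℝ) :
    ∫ t, f t ∂betaLaw α δ = ∫ t in Ioo (-δ) δ, betaDensity α δ t * f t := by
  rw [betaLaw, integral_withDensity_eq_integral_toReal_smul measurable_betaDensity.ennreal_ofReal
    (ae_of_all _ fun _ => ENNReal.ofReal_lt_top)]
  refine setIntegral_congr_fun measurableSet_Ioo fun t ht => ?_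
  rw [ENNReal.toReal_ofReal (betaDensity_nonneg hα hδ ht), smul_eq_mul]

lemma integrable_betaLaw_iff (hα : 0 < α) (hδ : 0 < δ) {f : ℝ → ℝ} :
    Integrable f (betaLaw α δ) ↔
      IntegrableOn (fun t => betaDensity α δ t * f t) (Ioo (-δ) δ) := by
  rw [betaLaw, integrable_withDensity_iff_integrable_smul'
    measurable_betaDensity.ennreal_ofReal (ae_of_all _ fun _ => ENNReal.ofReal_lt_top)]
  refine integrableOn_congr_fun (fun t ht => ?_) measurableSet_Ioo
  rw [ENNReal.toReal_ofReal (betaDensity_nonneg hα hδ ht), smul_eq_mul]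

lemma ae_mem_Ioo_betaLaw : ∀ᵐ t ∂betaLaw α δ, t ∈ Ioo (-δ) δ :=
  (withDensity_absolutelyContinuous _ _).ae_le (ae_restrict_mem measurableSet_Ioo)

lemma integrable_pow_betaLaw [IsFiniteMeasure (betaLaw α δ)] (k : ℕ) :
    Integrable (fun t => t ^ k) (betaLaw α δ) := by
  refine .of_bound (by fun_prop) (δ ^ k) ?_
  filter_upwards [ae_mem_Ioo_betaLaw] with t ht
  rw [norm_pow]
  exact pow_le_pow_left₀ (norm_nonneg t) (abs_lt.2 ht).le k

lemma integrableOn_rpow_sq_sub_sq_of_betaLaw (hα : 0 < α) (hδ : 0 < δ)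
    [IsFiniteMeasure (betaLaw α δ)] :
    IntegrableOn (fun t => (δ ^ 2 - t ^ 2) ^ (α - 1)) (Ioo (-δ) δ) := by
  obtain ⟨c, hc, hp⟩ := exists_pos_betaDensity_eq hα hδ
  have h := ((integrable_betaLaw_iff hα hδ).1 (integrable_pow_betaLaw 0)).const_mul c⁻¹
  simpa [IntegrableOn, hp, hc.ne'] using h

theorem betaLaw_moment_recurrence (hα : 0 < α) (hδ : 0 < δ) [IsFiniteMeasure (betaLaw α δ)]
    (k : ℕ) :
    ((k : ℝ) + 1 + 2 * α) * ∫ t, t ^ (k + 2) ∂betaLaw α δ =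
      ((k : ℝ) + 1) * δ ^ 2 * ∫ t, t ^ k ∂betaLaw α δ := by
  obtain ⟨c, -, hp⟩ := exists_pos_betaDensity_eq hα hδ
  have hmoment (j : ℕ) : ∫ t, t ^ j ∂betaLaw α δ =
      c * ∫ t in Ioo (-δ) δ, t ^ j * (δ ^ 2 - t ^ 2) ^ (α - 1) := by
    rw [integral_betaLaw hα hδ, ← integral_const_mul]
    congr 1 with t
    rw [hp]
    ring
  rw [hmoment, hmoment]
  linear_combination c * setIntegral_pow_mul_rpow_sq_sub_sq_recurrence hα hδ
    (integrableOn_rpow_sq_sub_sq_of_betaLaw hα hδ) k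

lemma integral_pow_betaLaw_of_odd (hα : 0 < α) (hδ : 0 < δ) {k : ℕ} (hk : Odd k) :
    ∫ t, t ^ k ∂betaLaw α δ = 0 := by
  rw [integral_betaLaw hα hδ]
  exact setIntegral_Ioo_neg_eq_zero_of_odd hδ.le fun t => by simp [betaDensity, hk.neg_pow]

variable [IsProbabilityMeasure (betaLaw α δ)]

lemma integral_sq_betaLaw (hα : 0 < α) (hδ : 0 < δ) :
    ∫ t, t ^ 2 ∂betaLaw α δ = δ ^ 2 / (2 * α + 1) := by
  have h := betaLaw_moment_recurrence hα hδ 0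
  simp only [CharP.cast_eq_zero, pow_zero, integral_const, probReal_univ, smul_eq_mul] at h
  rw [eq_div_iff (by positivity)]
  linarith

lemma integral_pow_four_betaLaw (hα : 0 < α) (hδ : 0 < δ) :
    ∫ t, t ^ 4 ∂betaLaw α δ = 3 * δ ^ 4 / ((2 * α + 1) * (2 * α + 3)) := by
  have h := betaLaw_moment_recurrence hα hδ 2
  rw [integral_sq_betaLaw hα hδ] at h
  rw [eq_div_iff (by positivity)]
  field_simp at h
  linear_combination h

end betaLaw

theorem variance_sq_dist_beta {Ω : Type*} [MeasureSpace Ω]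
    [IsProbabilityMeasure (ℙ : Measure Ω)]
    (α δ u : ℝ) (hα : 0 < α) (hδ : 0 < δ)
    (ξ : Ω → ℝ) (hξ : Measurable ξ)
    (hlaw : Measure.map ξ ℙ =
      (volume.restrict (Set.Ioo (-δ) δ)).withDensity
        (fun t => ENNReal.ofReal (betaDensity α δ t))) :
    variance (fun ω => (ξ ω - u) ^ 2) ℙ =
      4 * δ ^ 2 / (2 * α + 1) * (u ^ 2 + δ ^ 2 * α / ((2 * α + 1) * (2 * α + 3))) := by
  change Measure.map ξ ℙ = betaLaw α δ at hlaw
  have : IsProbabilityMeasure (betaLaw α δ) :=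
    hlaw ▸ Measure.isProbabilityMeasure_map hξ.aemeasurable
  have hmoment (k : ℕ) : ∫ ω, ξ ω ^ k = ∫ t, t ^ k ∂betaLaw α δ := by
    rw [← hlaw, integral_map hξ.aemeasurable (by fun_prop)]
  have hint (k : ℕ) : Integrable (fun ω => ξ ω ^ k) :=
    (integrable_map_measure (continuous_pow k).aestronglyMeasurable hξ.aemeasurable).1
      (hlaw ▸ integrable_pow_betaLaw k)
  have h₁ : ∫ ω, ξ ω = 0 := by
    simpa only [pow_one] using (hmoment 1).trans (integral_pow_betaLaw_of_odd hα hδ odd_one)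
  have h₃ : ∫ ω, ξ ω ^ 3 = 0 :=
    (hmoment 3).trans (integral_pow_betaLaw_of_odd hα hδ (by decide))
  rw [variance_sq_sub_const hint h₁ h₃, hmoment, hmoment, integral_sq_betaLaw hα hδ,
    integral_pow_four_betaLaw hα hδ]
  field_simp
  ring
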